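/- For a finite recursion-free body-disjoint set HC of Horn clauses, the size of the expansion exp(HC) is linear in the total size of HC; in particular, each clause of HC is inlined at most once in exp(HC). -/

import Mathlib

namespace Stmt11

/- Horn clauses over a constraint language.
`S` indexes the class of structures, `U s` is the universe of structure `s`,
`V` is the set of first-order variables, `Con` the constraints (interpreted
by `interp`), `Tm` the first-order terms (evaluated by `tval`), `R` the
uninterpreted relation symbols with arities `arity`, and `xvar p` the fixed
vector of argument variables of the relation symbol `p`. -/
variable {S V Con Tm R : Type} (U : S → Type)
  (interp : Con → (s : S) → (V → U s) → Prop)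
  (tval : Tm → (s : S) → (V → U s) → U s)
  (arity : R → ℕ) (xvar : (p : R) → Fin (arity p) → V)

/-- An application p(t₁,…,tₖ) of a relation symbol to terms. -/
structure HAtom (arity : R → ℕ) (Tm : Type) : Type where
  rel : R
  args : Fin (arity rel) → Tm

/-- A Horn clause C ∧ B₁ ∧ … ∧ Bₙ → H; `head = none` encodes head `false`. -/
structure Clause (Con : Type) (arity : R → ℕ) (Tm : Type) : Type where
  c : Con
  body : List (HAtom arity Tm)
  head : Option (HAtom arity Tm)

/-- Interpretation of the relation symbols in a structure s. -/
def RelInterp (s : S) : Type _ := ∀ p : R, (Fin (arity p) → U s) → Prop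

/-- A clause holds in structure s under relation interpretation ρ. -/
def ClauseHoldsSem (s : S) (ρ : RelInterp U arity s) (cl : Clause Con arity Tm) : Prop :=
  ∀ α : V → U s,
    interp cl.c s α →
    (∀ b ∈ cl.body, ρ b.rel fun i => tval (b.args i) s α) →
    (match cl.head with
      | none => False
      | some a => ρ a.rel fun i => tval (a.args i) s α)

/-- Semantic solvability: in every structure of the class there exist
relations making all clauses true. -/
def SemSolvable (HC : List (Clause Con arity Tm)) : Prop :=
  ∀ s : S, ∃ ρ : RelInterp U arity s, ∀ cl ∈ HC, ClauseHoldsSem U interp tval arity s ρ cl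

open Classical in
/-- The assignment obtained from α by overriding the argument variables
of the relation symbol of `a` with the values of the argument terms
(semantic substitution sol(p)[t̄]). -/
noncomputable def override (s : S) (α : V → U s) (a : HAtom arity Tm) : V → U s :=
  fun v => if h : ∃ i, xvar a.rel i = v then tval (a.args (Classical.choose h)) s α else α v

/-- Instantiation sol(p)[t̄] of a relation symbol assignment at an atom. -/
def instA (sol : R → Con) (s : S) (α : V → U s) (a : HAtom arity Tm) : Prop :=
  interp (sol a.rel) s (override U tval arity xvar s α a)

/-- The instantiation sol(h) of a clause h is universally valid. -/
def ClauseHoldsSyn (sol : R → Con) (cl : Clause Con arity Tm) : Prop :=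
  ∀ (s : S) (α : V → U s),
    interp cl.c s α →
    (∀ b ∈ cl.body, instA U interp tval arity xvar sol s α b) →
    (match cl.head with
      | none => False
      | some a => instA U interp tval arity xvar sol s α a)

/-- sol(p) is a constraint "in the n free variables x̄_p": its interpretation
depends only on the designated argument variables. -/
def GoodSol (sol : R → Con) : Prop :=
  ∀ p : R, ∀ (s : S) (α β : V → U s),
    (∀ i, α (xvar p i) = β (xvar p i)) → (interp (sol p) s α ↔ interp (sol p) s β)

/-- Syntactic solvability: there is an assignment of constraints to relation
symbols validating (the universal closure of) every instantiated clause in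
every structure. -/
def SynSolvable (HC : List (Clause Con arity Tm)) : Prop :=
  ∃ sol : R → Con, GoodSol U interp arity xvar sol ∧
    ∀ cl ∈ HC, ClauseHoldsSyn U interp tval arity xvar sol cl
/-- The dependence relation of HC: p →_HC q if some clause has head symbol p
and q occurring in its body. -/
def Dep (HC : List (Clause Con arity Tm)) (p q : R) : Prop :=
  ∃ cl ∈ HC, (∃ a, cl.head = some a ∧ a.rel = p) ∧ (∃ b ∈ cl.body, b.rel = q)

/-- HC is recursion-free: the dependence relation is acyclic. -/
def RecursionFree (HC : List (Clause Con arity Tm)) : Prop :=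
  ∀ p : R, ¬ Relation.TransGen (Dep arity HC) p p

/-- Derivability of a relation-symbol fact in structure s by unfolding the
clauses of HC; for recursion-free HC this captures exactly satisfiability
of the inlined definitions exp'(p(t̄)) in the expansion exp(HC). -/
inductive Deriv (HC : List (Clause Con arity Tm)) (s : S) :
    (p : R) → (Fin (arity p) → U s) → Prop where
  | step (cl : Clause Con arity Tm) (hcl : cl ∈ HC) (a : HAtom arity Tm)
      (hhead : cl.head = some a) (α : V → U s)
      (hc : interp cl.c s α)
      (hb : ∀ b ∈ cl.body, Deriv HC s b.rel fun i => tval (b.args i) s α) :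
      Deriv HC s a.rel fun i => tval (a.args i) s α

/-- Satisfiability of the expansion exp(HC): some structure and assignment
satisfy the inlined body of some clause with head false. -/
def ExpSat (HC : List (Clause Con arity Tm)) : Prop :=
  ∃ (s : S), ∃ cl ∈ HC, cl.head = none ∧
    ∃ α : V → U s, interp cl.c s α ∧
      ∀ b ∈ cl.body, Deriv U interp tval arity HC s b.rel fun i => tval (b.args i) s α
/-- HC is body-disjoint: for each relation symbol p there is at most one
clause containing p in its body, and every clause contains p at most once. -/
def BodyDisjoint (HC : List (Clause Con arity Tm)) : Prop :=
  (∀ cl ∈ HC, cl.body.Pairwise fun a b => a.rel ≠ b.rel) ∧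
  (∀ cl₁ ∈ HC, ∀ cl₂ ∈ HC, ∀ b₁ ∈ cl₁.body, ∀ b₂ ∈ cl₂.body,
      b₁.rel = b₂.rel → cl₁ = cl₂)

/-- `c` is inlined directly below `d` in the expansion exp(HC): the head
symbol of `c` occurs in the body of `d`. -/
def InlinedBelow (d c : Clause Con arity Tm) : Prop :=
  ∃ a, c.head = some a ∧ ∃ b ∈ d.body, b.rel = a.rel

/-- An inlining chain of exp(HC): a nonempty sequence of clauses of HC,
starting at a clause with head `false`, each next clause being inlined
below the previous one.  The occurrences of a clause in exp(HC) correspond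
exactly to the inlining chains ending at that clause. -/
def InliningChain (HC : List (Clause Con arity Tm))
    (cs : List (Clause Con arity Tm)) : Prop :=
  cs ≠ [] ∧ (∀ c ∈ cs, c ∈ HC) ∧
  (∃ c₀, cs.head? = some c₀ ∧ c₀.head = none) ∧
  List.Chain' (InlinedBelow arity) cs

/- A clause with head `p(…)` can only be inlined below the unique clause of HC whose body
mentions `p`, so walking an inlining chain backwards from its last clause is deterministic. -/

section

variable {arity}

theorem InlinedBelow.head_ne_none {d c : Clause Con arity Tm} (h : InlinedBelow arity d c) :
    c.head ≠ none := by
  obtain ⟨a, ha, -⟩ := h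
  simp [ha]

theorem InlinedBelow.left_unique {HC : List (Clause Con arity Tm)} (hbd : BodyDisjoint arity HC)
    {d e c : Clause Con arity Tm} (hd : d ∈ HC) (he : e ∈ HC)
    (hdc : InlinedBelow arity d c) (hec : InlinedBelow arity e c) : d = e := by
  obtain ⟨a, ha, b₁, hb₁, hr₁⟩ := hdc
  obtain ⟨a', ha', b₂, hb₂, hr₂⟩ := hec
  obtain rfl : a = a' := Option.some_inj.mp (ha.symm.trans ha')
  exact hbd.2 d hd e he b₁ hb₁ b₂ hb₂ (hr₁.trans hr₂.symm)

theorem InliningChain.of_append_singleton {HC l : List (Clause Con arity Tm)}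
    {c : Clause Con arity Tm} (h : InliningChain arity HC (l ++ [c])) :
    (l = [] ∧ c.head = none) ∨
      (InliningChain arity HC l ∧ ∃ d ∈ l.getLast?, InlinedBelow arity d c) := by
  obtain ⟨-, hmem, ⟨c₀, hc₀, hc₀none⟩, hchain⟩ := h
  rcases eq_or_ne l [] with rfl | hl
  · left
    simp only [List.nil_append, List.head?_cons, Option.some_inj] at hc₀
    exact ⟨rfl, hc₀ ▸ hc₀none⟩
  · right
    obtain ⟨hchain_l, -, hlink⟩ := List.isChain_append.mp hchain
    refine ⟨⟨hl, fun x hx => hmem x (List.mem_append_left _ hx), ?_, hchain_l⟩, ?_⟩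
    · exact ⟨c₀, (List.head?_append_of_ne_nil l hl).symm.trans hc₀, hc₀none⟩
    · obtain ⟨d, hd⟩ := Option.isSome_iff_exists.mp (List.getLast?_isSome.mpr hl)
      exact ⟨d, hd, hlink d hd c rfl⟩

theorem injOn_getLast?_inliningChain {HC : List (Clause Con arity Tm)}
    (hbd : BodyDisjoint arity HC) :
    Set.InjOn List.getLast? {cs | InliningChain arity HC cs} := by
  intro cs₁ h₁ cs₂ h₂ hlast
  induction cs₁ using List.reverseRecOn generalizing cs₂ with
  | nil => exact absurd rfl h₁.1
  | append_singleton ds c ih =>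
    rcases cs₂.eq_nil_or_concat' with rfl | ⟨es, e, rfl⟩
    · exact absurd rfl h₂.1
    rw [List.getLast?_concat, List.getLast?_concat, Option.some_inj] at hlast
    subst hlast
    rcases h₁.of_append_singleton with ⟨rfl, hnone₁⟩ | ⟨hds, d, hd, hdc⟩ <;>
      rcases h₂.of_append_singleton with ⟨rfl, hnone₂⟩ | ⟨hes, e, he, hec⟩
    · rfl
    · exact absurd hnone₁ hec.head_ne_none
    · exact absurd hnone₂ hdc.head_ne_none
    · have hde : d = e := hdc.left_unique hbd (hds.2.1 d (List.mem_of_getLast? hd))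
        (hes.2.1 e (List.mem_of_getLast? he)) hec
      rw [ih hds hes (by rw [hd, he, hde])]

theorem finite_setOf_inliningChain {HC : List (Clause Con arity Tm)}
    (hbd : BodyDisjoint arity HC) : {cs | InliningChain arity HC cs}.Finite := by
  refine Set.Finite.of_finite_image ?_ (injOn_getLast?_inliningChain hbd)
  refine (HC.finite_toSet.image some).subset ?_
  rintro _ ⟨cs, hcs, rfl⟩
  rw [List.getLast?_eq_some_getLast hcs.1]
  exact ⟨_, hcs.2.1 _ (List.getLast_mem hcs.1), rfl⟩

end

theorem stmt11 (HC : List (Clause Con arity Tm))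
    (hbd : BodyDisjoint arity HC) :
    (∀ cs₁ cs₂, InliningChain arity HC cs₁ → InliningChain arity HC cs₂ →
        cs₁.getLast? = cs₂.getLast? → cs₁ = cs₂) ∧
    {cs | InliningChain arity HC cs}.Finite :=
  ⟨fun _ _ h₁ h₂ => injOn_getLast?_inliningChain hbd h₁ h₂,
    finite_setOf_inliningChain hbd⟩

end Stmt11
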